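/- arXiv:1511.02402 — 7 statements merged into one kernel-verified Lean document; each statement's English description precedes it below -/
import Mathlib

section
/- Let d be a symmetric nonnegative function on a finite set U satisfying the α-relaxed triangle inequality d(u,v) ≤ α(d(v,w) + d(w,u)) for all u,v,w, with α ≥ 1. For any two disjoint finite subsets X, Y of U, define d(X) = Σ_{{u,v}⊆X} d(u,v) and d(X,Y) = Σ_{u∈X, v∈Y} d(u,v). Then α(|X|−1)·d(X,Y) ≥ |Y|·d(X). -/
open Finset

noncomputable def dSet {U : Type*} (d : U → U → ℝ) (X : Finset U) : ℝ :=
  (∑ u ∈ X, ∑ v ∈ X, d u v) / 2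

noncomputable def dCross {U : Type*} (d : U → U → ℝ) (X Y : Finset U) : ℝ :=
  ∑ u ∈ X, ∑ v ∈ Y, d u v

/-! Sum the relaxed triangle inequality `d u v ≤ α (d v w + d w u)` over all ordered pairs
`u ≠ v` of `X` and all `w ∈ Y`. The left side counts every pair of `X` twice and `|Y|` times,
giving `2 |Y| d(X)`; on the right each `d(x, w)` with `x ∈ X` occurs once for each of the
`|X| - 1` partners of `x`, in each of the two slots, giving `2 α (|X| - 1) d(X, Y)`. -/

namespace Finset

variable {ι : Type*} [DecidableEq ι]

theorem sum_sum_erase_of_diag_eq_zero {M : Type*} [AddCommMonoid M] (s : Finset ι)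
    {f : ι → ι → M} (hf : ∀ i, f i i = 0) :
    ∑ i ∈ s, ∑ j ∈ s.erase i, f i j = ∑ i ∈ s, ∑ j ∈ s, f i j :=
  sum_congr rfl fun i _ => sum_erase s (hf i)

theorem sum_sum_erase_add {R : Type*} [CommRing R] (s : Finset ι) (g : ι → R) :
    ∑ i ∈ s, ∑ j ∈ s.erase i, (g j + g i) = 2 * ((#s : R) - 1) * ∑ i ∈ s, g i := by
  have hother : ∑ i ∈ s, ∑ j ∈ s.erase i, g j = ((#s : R) - 1) * ∑ i ∈ s, g i := by
    rw [sum_congr rfl fun _ hi => sum_erase_eq_sub hi, sum_sub_distrib, sum_const,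
      nsmul_eq_mul]
    ring
  have hself : ∑ i ∈ s, ∑ j ∈ s.erase i, g i = ((#s : R) - 1) * ∑ i ∈ s, g i := by
    rw [mul_sum]
    refine sum_congr rfl fun i hi => ?_
    rw [sum_const, nsmul_eq_mul, cast_card_erase_of_mem hi]
  simp only [sum_add_distrib, hother, hself]
  ring

end Finset

theorem stmt0_general {U : Type*} [DecidableEq U] (d : U → U → ℝ) (α : ℝ)
    (hsymm : ∀ u v, d u v = d v u)
    (hself : ∀ u, d u u = 0)
    (htri : ∀ u v w, d u v ≤ α * (d v w + d w u))
    (X Y : Finset U) :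
    α * ((X.card : ℝ) - 1) * dCross d X Y ≥ (Y.card : ℝ) * dSet d X := by
  set g : U → ℝ := fun u => ∑ w ∈ Y, d u w
  have hpair : ∀ u v, (Y.card : ℝ) * d u v ≤ α * (g v + g u) := fun u v =>
    calc (Y.card : ℝ) * d u v = ∑ _w ∈ Y, d u v := by rw [sum_const, nsmul_eq_mul]
      _ ≤ ∑ w ∈ Y, α * (d v w + d u w) := sum_le_sum fun w _ => hsymm w u ▸ htri u v w
      _ = α * (g v + g u) := by rw [← mul_sum, sum_add_distrib]
  have hsum : ∑ u ∈ X, ∑ v ∈ X.erase u, (Y.card : ℝ) * d u v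
      ≤ ∑ u ∈ X, ∑ v ∈ X.erase u, α * (g v + g u) :=
    sum_le_sum fun u _ => sum_le_sum fun v _ => hpair u v
  simp only [← mul_sum] at hsum
  rw [sum_sum_erase_of_diag_eq_zero X hself, sum_sum_erase_add] at hsum
  rw [dSet, dCross]
  linarith

theorem stmt0 {U : Type*} [DecidableEq U] (d : U → U → ℝ) (α : ℝ) (hα : 1 ≤ α)
    (hnn : ∀ u v, 0 ≤ d u v) (hsymm : ∀ u v, d u v = d v u)
    (hself : ∀ u, d u u = 0)
    (htri : ∀ u v w, d u v ≤ α * (d v w + d w u))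
    (X Y : Finset U) (hXY : Disjoint X Y) :
    α * ((X.card : ℝ) - 1) * dCross d X Y ≥ (Y.card : ℝ) * dSet d X :=
  stmt0_general d α hsymm hself htri X Y
end

section
/- Let d be a symmetric nonnegative function on U satisfying the α-relaxed triangle inequality with α ≥ 1. Let B = {b_1,…,b_t} and C = {c_1,…,c_t} be disjoint subsets of U with t > 2 (all elements distinct). Then α·(d(B,C) − Σ_{i=1}^t d(b_i,c_i)) ≥ d(C), where d(C) = Σ_{{u,v}⊆C} d(u,v) and d(B,C) = Σ_{u∈B,v∈C} d(u,v). -/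
/-!
For every index `k`, the points `c i` with `i ≠ k` are all within relaxed distance of the single
point `b k`: each pair `c i, c j` satisfies `d (c i) (c j) ≤ α (d (b k) (c i) + d (b k) (c j))`,
so the total pairwise distance of `{c i | i ≠ k}` is at most `2α(t - 2) ∑_{i ≠ k} d (b k) (c i)`.
Summing over `k`, every pair `c i, c j` with `i ≠ j` is counted `t - 2` times on the left, and
every off-diagonal cross distance `d (b k) (c i)` exactly once on the right; dividing by `t - 2`
gives the theorem.
-/

open Finset

lemma dSet_image {U ι : Type*} [DecidableEq U] (d : U → U → ℝ) {f : ι → U}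
    (hf : Function.Injective f) (s : Finset ι) :
    dSet d (s.image f) = (∑ i ∈ s, ∑ j ∈ s, d (f i) (f j)) / 2 := by
  simp only [dSet, sum_image hf.injOn]

lemma dCross_image {U ι κ : Type*} [DecidableEq U] (d : U → U → ℝ) {f : ι → U} {g : κ → U}
    (hf : Function.Injective f) (hg : Function.Injective g) (s : Finset ι) (s' : Finset κ) :
    dCross d (s.image f) (s'.image g) = ∑ i ∈ s, ∑ j ∈ s', d (f i) (g j) := by
  simp only [dCross, sum_image hf.injOn, sum_image hg.injOn]

lemma sum_sum_erase_add_sum_erase {ι : Type*} [DecidableEq ι] (s : Finset ι) (g : ι → ℝ) :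
    ∑ i ∈ s, ∑ j ∈ s.erase i, (g i + g j) = 2 * ((#s : ℝ) - 1) * ∑ i ∈ s, g i := by
  have hrow : ∀ i ∈ s, ∑ j ∈ s.erase i, (g i + g j) = ((#s : ℝ) - 2) * g i + ∑ j ∈ s, g j := by
    intro i hi
    have hcard : (#(s.erase i) : ℝ) + 1 = #s := by exact_mod_cast card_erase_add_one hi
    rw [sum_add_distrib, sum_const, nsmul_eq_mul, sum_erase_eq_sub hi]
    linear_combination g i * hcard
  rw [sum_congr rfl hrow, sum_add_distrib, sum_const, nsmul_eq_mul, ← mul_sum]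
  ring

lemma sum_sum_erase_sum_erase {ι : Type*} [Fintype ι] [DecidableEq ι] (F : ι → ι → ℝ) :
    ∑ k, ∑ i ∈ univ.erase k, ∑ j ∈ univ.erase k, F i j
      = ((Fintype.card ι : ℝ) - 2) * ∑ i, ∑ j, F i j + ∑ k, F k k := by
  have hrow : ∀ k, ∑ i ∈ univ.erase k, ∑ j ∈ univ.erase k, F i j
      = ∑ i, ∑ j, F i j - ∑ j, F k j - ∑ i, F i k + F k k := by
    intro k
    simp only [sum_erase_eq_sub (mem_univ k), sum_sub_distrib]
    ring
  simp only [hrow, sum_add_distrib, sum_sub_distrib, sum_const, card_univ, nsmul_eq_mul]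
  rw [sum_comm (f := fun i k => F i k)]
  ring

section RelaxedTriangle

variable {U ι : Type*} {d : U → U → ℝ} {α : ℝ}

lemma sum_sum_le_of_relaxed_triangle [DecidableEq ι]
    (hsymm : ∀ u v, d u v = d v u) (hself : ∀ u, d u u = 0)
    (htri : ∀ u v w, d u v ≤ α * (d v w + d w u)) (s : Finset ι) (y : ι → U) (p : U) :
    ∑ i ∈ s, ∑ j ∈ s, d (y i) (y j) ≤ 2 * α * ((#s : ℝ) - 1) * ∑ i ∈ s, d p (y i) := by
  have hdiag : ∀ i ∈ s, ∑ j ∈ s, d (y i) (y j) = ∑ j ∈ s.erase i, d (y i) (y j) := by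
    intro i hi
    rw [sum_erase_eq_sub hi, hself, sub_zero]
  calc ∑ i ∈ s, ∑ j ∈ s, d (y i) (y j)
      = ∑ i ∈ s, ∑ j ∈ s.erase i, d (y i) (y j) := sum_congr rfl hdiag
    _ ≤ ∑ i ∈ s, ∑ j ∈ s.erase i, α * (d p (y i) + d p (y j)) := by
        gcongr with i _ j _
        rw [add_comm, hsymm p (y j)]
        exact htri _ _ _
    _ = 2 * α * ((#s : ℝ) - 1) * ∑ i ∈ s, d p (y i) := by
        simp only [← mul_sum, sum_sum_erase_add_sum_erase]
        ring

lemma sum_sum_le_of_relaxed_triangle_of_two_lt_card [Fintype ι] [DecidableEq ι]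
    (hsymm : ∀ u v, d u v = d v u) (hself : ∀ u, d u u = 0)
    (htri : ∀ u v w, d u v ≤ α * (d v w + d w u)) (ht : 2 < Fintype.card ι) (x y : ι → U) :
    ∑ i, ∑ j, d (y i) (y j) ≤ 2 * α * (∑ k, ∑ i, d (x k) (y i) - ∑ i, d (x i) (y i)) := by
  have ht' : (0 : ℝ) < Fintype.card ι - 2 := by
    rw [sub_pos]
    exact_mod_cast ht
  have hstar : ∀ k, ∑ i ∈ univ.erase k, ∑ j ∈ univ.erase k, d (y i) (y j)
      ≤ 2 * α * ((Fintype.card ι : ℝ) - 2) * ∑ i ∈ univ.erase k, d (x k) (y i) := by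
    intro k
    have hcard : (#(univ.erase k) : ℝ) + 1 = Fintype.card ι := by
      exact_mod_cast card_erase_add_one (mem_univ k)
    calc _ ≤ 2 * α * ((#(univ.erase k) : ℝ) - 1) * ∑ i ∈ univ.erase k, d (x k) (y i) :=
          sum_sum_le_of_relaxed_triangle hsymm hself htri _ y (x k)
      _ = _ := by rw [← hcard]; ring
  have hsum := sum_le_sum fun k (_ : k ∈ univ) => hstar k
  rw [sum_sum_erase_sum_erase, ← mul_sum] at hsum
  simp only [hself, sum_const_zero, add_zero, sum_erase_eq_sub (mem_univ _), sum_sub_distrib]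
    at hsum
  refine le_of_mul_le_mul_left ?_ ht'
  linarith

end RelaxedTriangle

theorem stmt2_general {U : Type*} [DecidableEq U] (d : U → U → ℝ) (α : ℝ)
    (hsymm : ∀ u v, d u v = d v u)
    (hself : ∀ u, d u u = 0)
    (htri : ∀ u v w, d u v ≤ α * (d v w + d w u))
    (t : ℕ) (ht : 2 < t) (b c : Fin t → U)
    (hb : Function.Injective b) (hc : Function.Injective c) :
    α * (dCross d (Finset.image b Finset.univ) (Finset.image c Finset.univ)
        - ∑ i, d (b i) (c i))
      ≥ dSet d (Finset.image c Finset.univ) := by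
  have key := sum_sum_le_of_relaxed_triangle_of_two_lt_card hsymm hself htri
    (by simpa using ht) b c
  rw [dCross_image d hb hc, dSet_image d hc, ge_iff_le]
  linarith

theorem stmt2 {U : Type*} [DecidableEq U] (d : U → U → ℝ) (α : ℝ) (hα : 1 ≤ α)
    (hnn : ∀ u v, 0 ≤ d u v) (hsymm : ∀ u v, d u v = d v u)
    (hself : ∀ u, d u u = 0)
    (htri : ∀ u v w, d u v ≤ α * (d v w + d w u))
    (t : ℕ) (ht : 2 < t) (b c : Fin t → U)
    (hb : Function.Injective b) (hc : Function.Injective c)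
    (hdisj : ∀ i j, b i ≠ c j) :
    α * (dCross d (Finset.image b Finset.univ) (Finset.image c Finset.univ)
        - ∑ i, d (b i) (c i))
      ≥ dSet d (Finset.image c Finset.univ) :=
  stmt2_general d α hsymm hself htri t ht b c hb hc
end

section
/- Let d be symmetric, nonnegative, satisfying the α-relaxed triangle inequality with α ≥ 1 on a finite set U. Let S be a finite subset containing B = {b_1,…,b_t}, with A = S \ B, and let C = {c_1,…,c_t} be disjoint from S, t > 2. Then Σ_{i=1}^t d(S − b_i + c_i) ≥ (t−2)·d(S) + (1/α)·d(A ∪ C), where d(X) denotes the sum of distances over unordered pairs of X. -/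
/-! Replacing `b i` by `c i` changes `d(S)` by `d(c i, S) - d(b i, S) - d(c i, b i)`. Summing over
`i` and splitting `S = A ∪ B`, the claim reduces to `d(C) ≤ α (d(C, B) - ∑ i, d(c i, b i))`, the
terms `d(A)` and `d(A, C)` needing only `1 / α ≤ 1`. For the reduced claim, bound each
`d(c i, c j)` by the relaxed triangle inequality through each of the `t - 2` points `b k` with
`k ≠ i, j`: in the sum over all `i ≠ j`, every `d(c i, b k)` with `i ≠ k` then occurs
`2 (t - 2)` times. -/

open Finset

section DistanceSums

variable {U : Type*} (d : U → U → ℝ)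

lemma dSet_eq_dCross_div_two (X : Finset U) : dSet d X = dCross d X X / 2 := rfl

lemma dCross_nonneg (hnn : ∀ u v, 0 ≤ d u v) (X Y : Finset U) : 0 ≤ dCross d X Y :=
  sum_nonneg fun u _ => sum_nonneg fun v _ => hnn u v

lemma dSet_nonneg (hnn : ∀ u v, 0 ≤ d u v) (X : Finset U) : 0 ≤ dSet d X :=
  div_nonneg (dCross_nonneg d hnn X X) zero_le_two

lemma dCross_comm (hsymm : ∀ u v, d u v = d v u) (X Y : Finset U) :
    dCross d X Y = dCross d Y X := by
  rw [dCross, dCross, sum_comm]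
  simp only [hsymm]

lemma dCross_image_s3 {ι : Type*} [Fintype ι] [DecidableEq U] {x : ι → U}
    (hx : Function.Injective x) (Y : Finset U) :
    dCross d (image x univ) Y = ∑ i, ∑ v ∈ Y, d (x i) v :=
  sum_image hx.injOn

variable [DecidableEq U]

lemma dCross_union_left {X Y : Finset U} (h : Disjoint X Y) (Z : Finset U) :
    dCross d (X ∪ Y) Z = dCross d X Z + dCross d Y Z :=
  sum_union h

lemma dCross_union_right (X : Finset U) {Y Z : Finset U} (h : Disjoint Y Z) :
    dCross d X (Y ∪ Z) = dCross d X Y + dCross d X Z := by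
  simp only [dCross, sum_union h, sum_add_distrib]

lemma dSet_union (hsymm : ∀ u v, d u v = d v u) {X Y : Finset U} (h : Disjoint X Y) :
    dSet d (X ∪ Y) = dSet d X + dSet d Y + dCross d X Y := by
  simp only [dSet_eq_dCross_div_two, dCross_union_left d h, dCross_union_right d _ h,
    dCross_comm d hsymm Y X]
  ring

lemma dSet_insert (hsymm : ∀ u v, d u v = d v u) (hself : ∀ u, d u u = 0)
    {x : U} {X : Finset U} (hx : x ∉ X) :
    dSet d (insert x X) = dSet d X + ∑ v ∈ X, d x v := by
  rw [insert_eq, dSet_union d hsymm (disjoint_singleton_left.2 hx)]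
  simp [dSet, dCross, hself]

lemma dSet_insert_erase (hsymm : ∀ u v, d u v = d v u) (hself : ∀ u, d u u = 0)
    {S : Finset U} {b c : U} (hb : b ∈ S) (hc : c ∉ S) :
    dSet d (insert c (S.erase b))
      = dSet d S - ∑ v ∈ S, d b v + ∑ v ∈ S, d c v - d c b := by
  have hS := dSet_insert d hsymm hself (notMem_erase b S)
  rw [insert_erase hb, sum_erase_eq_sub hb, hself] at hS
  rw [dSet_insert d hsymm hself fun h => hc (mem_of_mem_erase h), sum_erase_eq_sub hb, hS]
  ring

lemma dCross_eq_add_dCross_sdiff (X : Finset U) {B S : Finset U} (hBS : B ⊆ S) :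
    dCross d X S = dCross d X (S \ B) + dCross d X B := by
  rw [← dCross_union_right d X sdiff_disjoint, sdiff_union_of_subset hBS]

lemma two_mul_dSet_sub_dCross (hsymm : ∀ u v, d u v = d v u) {B S : Finset U} (hBS : B ⊆ S) :
    2 * dSet d S - dCross d B S = 2 * dSet d (S \ B) + dCross d (S \ B) B := by
  have hS : dSet d S = dSet d (S \ B) + dSet d B + dCross d (S \ B) B := by
    rw [← dSet_union d hsymm sdiff_disjoint, sdiff_union_of_subset hBS]
  rw [hS, dCross_eq_add_dCross_sdiff d B hBS, dCross_comm d hsymm B, dSet_eq_dCross_div_two d B]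
  ring

lemma sum_dSet_insert_erase {ι : Type*} [Fintype ι] (hsymm : ∀ u v, d u v = d v u)
    (hself : ∀ u, d u u = 0) {S : Finset U} {b c : ι → U} (hb : Function.Injective b)
    (hc : Function.Injective c) (hbS : ∀ i, b i ∈ S) (hcS : ∀ i, c i ∉ S) :
    ∑ i, dSet d (insert (c i) (S.erase (b i)))
      = Fintype.card ι * dSet d S - dCross d (image b univ) S + dCross d (image c univ) S
        - ∑ i, d (c i) (b i) := by
  simp only [dSet_insert_erase d hsymm hself (hbS _) (hcS _), dCross_image_s3 d hb,
    dCross_image_s3 d hc, sum_add_distrib, sum_sub_distrib, sum_const, card_univ, nsmul_eq_mul]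

end DistanceSums

section RelaxedTriangle

variable {U ι : Type*} [Fintype ι] [DecidableEq ι]

lemma card_erase_erase_univ {i k : ι} (hki : k ≠ i) :
    (#((univ.erase i).erase k) : ℝ) = Fintype.card ι - 2 := by
  have hk := card_erase_add_one (mem_erase.2 ⟨hki, mem_univ k⟩)
  have hi := card_erase_add_one (mem_univ i)
  rw [card_univ, ← hk] at hi
  rw [← hi]
  push_cast
  ring

lemma sum_sum_erase_comm (F : ι → ι → ℝ) :
    ∑ i, ∑ j ∈ univ.erase i, F i j = ∑ i, ∑ j ∈ univ.erase i, F j i :=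
  sum_comm' fun i j => by simp [ne_comm]

lemma sum_sum_erase_sum_erase_erase (g : ι → ι → ℝ) :
    ∑ i, ∑ j ∈ univ.erase i, ∑ k ∈ (univ.erase i).erase j, g i k
      = (Fintype.card ι - 2) * ∑ i, ∑ k ∈ univ.erase i, g i k := by
  rw [mul_sum]
  refine sum_congr rfl fun i _ => ?_
  rw [sum_comm' (t' := univ.erase i) (s' := fun k => (univ.erase i).erase k), mul_sum]
  · refine sum_congr rfl fun k hk => ?_
    rw [sum_const, nsmul_eq_mul, card_erase_erase_univ (ne_of_mem_erase hk)]
  · intro j k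
    simp only [mem_erase, mem_univ, and_true]
    tauto

variable (d : U → U → ℝ) {α : ℝ}

lemma sum_sum_erase_le_of_relaxed_triangle (hsymm : ∀ u v, d u v = d v u)
    (htri : ∀ u v w, d u v ≤ α * (d v w + d w u)) (hcard : 2 < Fintype.card ι)
    (x y : ι → U) :
    ∑ i, ∑ j ∈ univ.erase i, d (x i) (x j)
      ≤ 2 * α * ∑ i, ∑ k ∈ univ.erase i, d (x i) (y k) := by
  have hpos : (0 : ℝ) < Fintype.card ι - 2 := by
    have : (2 : ℝ) < Fintype.card ι := by exact_mod_cast hcard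
    linarith
  refine le_of_mul_le_mul_left ?_ hpos
  calc (Fintype.card ι - 2) * ∑ i, ∑ j ∈ univ.erase i, d (x i) (x j)
      = ∑ i, ∑ j ∈ univ.erase i, ∑ _k ∈ (univ.erase i).erase j, d (x i) (x j) := by
        simp only [mul_sum, sum_const, nsmul_eq_mul]
        refine sum_congr rfl fun i _ => sum_congr rfl fun j hj => ?_
        rw [card_erase_erase_univ (ne_of_mem_erase hj)]
    _ ≤ ∑ i, ∑ j ∈ univ.erase i, ∑ k ∈ (univ.erase i).erase j,
          α * (d (x i) (y k) + d (x j) (y k)) := by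
        gcongr with i _ j _ k _
        rw [hsymm (x i) (y k), add_comm]
        exact htri _ _ _
    _ = α * (∑ i, ∑ j ∈ univ.erase i, ∑ k ∈ (univ.erase i).erase j, d (x i) (y k)
          + ∑ i, ∑ j ∈ univ.erase i, ∑ k ∈ (univ.erase i).erase j, d (x j) (y k)) := by
        simp only [mul_sum, mul_add, sum_add_distrib]
    _ = α * (2 * ∑ i, ∑ j ∈ univ.erase i, ∑ k ∈ (univ.erase i).erase j, d (x i) (y k)) := by
        rw [sum_sum_erase_comm fun i j => ∑ k ∈ (univ.erase i).erase j, d (x j) (y k)]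
        simp only [erase_right_comm (s := univ)]
        ring
    _ = (Fintype.card ι - 2) * (2 * α * ∑ i, ∑ k ∈ univ.erase i, d (x i) (y k)) := by
        rw [sum_sum_erase_sum_erase_erase fun i k => d (x i) (y k)]
        ring

end RelaxedTriangle

lemma dSet_image_le {U ι : Type*} [DecidableEq U] [Fintype ι] (d : U → U → ℝ) {α : ℝ}
    (hsymm : ∀ u v, d u v = d v u) (hself : ∀ u, d u u = 0)
    (htri : ∀ u v w, d u v ≤ α * (d v w + d w u)) (hcard : 2 < Fintype.card ι)
    {x y : ι → U} (hx : Function.Injective x) (hy : Function.Injective y) :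
    dSet d (image x univ)
      ≤ α * (dCross d (image x univ) (image y univ) - ∑ i, d (x i) (y i)) := by
  classical
  have key := sum_sum_erase_le_of_relaxed_triangle d hsymm htri hcard x y
  simp only [sum_erase_eq_sub (mem_univ _), hself, sub_zero, sum_sub_distrib] at key
  rw [dSet_eq_dCross_div_two, dCross_image_s3 d hx, dCross_image_s3 d hx]
  simp only [sum_image hx.injOn, sum_image hy.injOn]
  linarith

theorem stmt3 {U : Type*} [DecidableEq U] (d : U → U → ℝ) (α : ℝ) (hα : 1 ≤ α)
    (hnn : ∀ u v, 0 ≤ d u v) (hsymm : ∀ u v, d u v = d v u)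
    (hself : ∀ u, d u u = 0)
    (htri : ∀ u v w, d u v ≤ α * (d v w + d w u))
    (S : Finset U) (t : ℕ) (ht : 2 < t) (b c : Fin t → U)
    (hb : Function.Injective b) (hc : Function.Injective c)
    (hbS : ∀ i, b i ∈ S) (hcS : ∀ i, c i ∉ S) :
    ∑ i, dSet d (insert (c i) (S.erase (b i)))
      ≥ ((t : ℝ) - 2) * dSet d S
        + (1 / α) * dSet d ((S \ Finset.image b Finset.univ) ∪ Finset.image c Finset.univ) := by
  set B := image b univ
  set C := image c univ
  have hBS : B ⊆ S := image_subset_iff.2 fun i _ => hbS i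
  have hAC : Disjoint (S \ B) C := disjoint_right.2 fun u hu huA => by
    obtain ⟨i, -, rfl⟩ := mem_image.1 hu
    exact hcS i (mem_sdiff.1 huA).1
  have hα0 : 0 < α := one_pos.trans_le hα
  have hC : 1 / α * dSet d C ≤ dCross d C B - ∑ i, d (c i) (b i) := by
    rw [one_div, inv_mul_le_iff₀ hα0]
    exact dSet_image_le d hsymm hself htri (by simpa using ht) hc hb
  have hshrink : ∀ r, 0 ≤ r → 1 / α * r ≤ r := fun r hr =>
    mul_le_of_le_one_left hr (div_le_one_of_le₀ hα hα0.le)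
  have hA := dSet_nonneg d hnn (S \ B)
  have hsplit := two_mul_dSet_sub_dCross d hsymm hBS
  rw [ge_iff_le, sum_dSet_insert_erase d hsymm hself hb hc hbS hcS, Fintype.card_fin,
    dCross_eq_add_dCross_sdiff d C hBS, dSet_union d hsymm hAC, dCross_comm d hsymm _ C,
    mul_add, mul_add]
  linarith [hshrink _ hA, hshrink _ (dCross_nonneg d hnn C (S \ B)),
    dCross_nonneg d hnn (S \ B) B]
end

section
/- Let f be a monotone submodular function on subsets of U. Let S and O be sets of equal cardinality with A = S ∩ O, B = S \ A = {b_1,…,b_t}, C = O \ A = {c_1,…,c_t}, and let g be any bijection from B to C with c_i = g(b_i). Then Σ_{i=1}^t f((S \ {b_i}) ∪ {c_i}) ≥ (t−2)·f(S) + f(O). -/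
open Finset

/-!
Swapping `b_i` for `c_i` gains, by submodularity, at least the marginal gain of adding `c_i` to
`S` plus the (negative) marginal change of removing `b_i` from `S`. Summed over `i`, the gains
of adding are at least `f (S ∪ O) - f S ≥ f O - f S`, and the losses of removing are at most
`f S - f (S ∩ O) ≤ f S`.
-/

section Submodular

variable {U : Type*} [DecidableEq U] {f : Finset U → ℝ}

theorem sub_le_sum_insert_sub (hsub : ∀ X Y, f (X ∪ Y) + f (X ∩ Y) ≤ f X + f Y)
    (S X : Finset U) : f (S ∪ X) - f S ≤ ∑ x ∈ X, (f (insert x S) - f S) := by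
  induction X using Finset.induction with
  | empty => simp
  | @insert a X ha ih =>
    have hunion : (S ∪ X) ∪ insert a S = S ∪ insert a X := by
      ext; simp only [mem_union, mem_insert]; tauto
    have hinter : (S ∪ X) ∩ insert a S = S := by
      ext x; simp only [mem_inter, mem_union, mem_insert]
      constructor
      · rintro ⟨hx | hx, rfl | hx'⟩ <;> first | assumption | exact absurd hx ha
      · exact fun hx => ⟨Or.inl hx, Or.inr hx⟩
    have := hsub (S ∪ X) (insert a S)
    rw [hunion, hinter] at this
    rw [sum_insert ha]
    linarith

theorem sum_sub_erase_le_sub_sdiff (hsub : ∀ X Y, f (X ∪ Y) + f (X ∩ Y) ≤ f X + f Y)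
    (S X : Finset U) : ∑ x ∈ X, (f S - f (S.erase x)) ≤ f S - f (S \ X) := by
  induction X using Finset.induction with
  | empty => simp
  | @insert a X ha ih =>
    have hunion : (S \ X) ∪ S.erase a = S := by
      ext x; simp only [mem_union, mem_sdiff, mem_erase]
      by_cases hxa : x = a
      · subst hxa; tauto
      · tauto
    have hinter : (S \ X) ∩ S.erase a = S \ insert a X := by
      ext; simp only [mem_inter, mem_sdiff, mem_erase, mem_insert]; tauto
    have := hsub (S \ X) (S.erase a)
    rw [hunion, hinter] at this
    rw [sum_insert ha]
    linarith

theorem add_sub_le_insert_erase (hsub : ∀ X Y, f (X ∪ Y) + f (X ∩ Y) ≤ f X + f Y)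
    {S : Finset U} {c : U} (hc : c ∉ S) (b : U) :
    f (insert c S) + f (S.erase b) - f S ≤ f (insert c (S.erase b)) := by
  have hunion : insert c (S.erase b) ∪ S = insert c S := by
    ext x; simp only [mem_union, mem_insert, mem_erase]
    by_cases hxb : x = b <;> tauto
  have hinter : insert c (S.erase b) ∩ S = S.erase b := by
    ext x; simp only [mem_inter, mem_insert, mem_erase]
    constructor
    · rintro ⟨rfl | hx, hxS⟩
      · exact absurd hxS hc
      · exact hx
    · exact fun hx => ⟨Or.inr hx, hx.2⟩
  have := hsub (insert c (S.erase b)) S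
  rw [hunion, hinter] at this
  linarith

end Submodular

theorem stmt7_general {U : Type*} [DecidableEq U] (f : Finset U → ℝ)
    (hnn : ∀ X, 0 ≤ f X)
    (hmono : ∀ X Y, X ⊆ Y → f X ≤ f Y)
    (hsub : ∀ X Y, f (X ∪ Y) + f (X ∩ Y) ≤ f X + f Y)
    (S O : Finset U)
    (t : ℕ) (b c : Fin t → U)
    (hb : Function.Injective b) (hc : Function.Injective c)
    (hB : Finset.image b Finset.univ = S \ O)
    (hC : Finset.image c Finset.univ = O \ S) :
    ∑ i, f (insert (c i) (S.erase (b i))) ≥ ((t : ℝ) - 2) * f S + f O := by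
  have hcS : ∀ i, c i ∉ S := fun i =>
    (mem_sdiff.mp (hC ▸ mem_image_of_mem c (mem_univ i))).2
  have hadd : f O - f S ≤ ∑ i, (f (insert (c i) S) - f S) := by
    rw [← sum_image (f := fun x => f (insert x S) - f S) (fun i _ j _ h => hc h), hC]
    calc f O - f S ≤ f (S ∪ O \ S) - f S := by
          gcongr; exact hmono _ _ (by rw [union_sdiff_self_eq_union]; exact subset_union_right)
      _ ≤ _ := sub_le_sum_insert_sub hsub S (O \ S)
  have hremove : ∑ i, (f S - f (S.erase (b i))) ≤ f S := by
    rw [← sum_image (f := fun x => f S - f (S.erase x)) (fun i _ j _ h => hb h), hB]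
    linarith [sum_sub_erase_le_sub_sdiff hsub S (S \ O), hnn (S \ (S \ O))]
  calc ((t : ℝ) - 2) * f S + f O
      ≤ ∑ i, ((f (insert (c i) S) - f S) - (f S - f (S.erase (b i))) + f S) := by
        simp only [sum_add_distrib, sum_sub_distrib, sum_const, card_univ, Fintype.card_fin,
          nsmul_eq_mul] at hadd hremove ⊢
        linarith
    _ ≤ ∑ i, f (insert (c i) (S.erase (b i))) :=
        sum_le_sum fun i _ => by linarith [add_sub_le_insert_erase hsub (hcS i) (b i)]

theorem stmt7 {U : Type*} [DecidableEq U] (f : Finset U → ℝ)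
    (hnn : ∀ X, 0 ≤ f X)
    (hmono : ∀ X Y, X ⊆ Y → f X ≤ f Y)
    (hsub : ∀ X Y, f (X ∪ Y) + f (X ∩ Y) ≤ f X + f Y)
    (S O : Finset U) (hcard : S.card = O.card)
    (t : ℕ) (ht : 1 ≤ t) (b c : Fin t → U)
    (hb : Function.Injective b) (hc : Function.Injective c)
    (hB : Finset.image b Finset.univ = S \ O)
    (hC : Finset.image c Finset.univ = O \ S) :
    ∑ i, f (insert (c i) (S.erase (b i))) ≥ ((t : ℝ) - 2) * f S + f O :=
  stmt7_general f hnn hmono hsub S O t b c hb hc hB hC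
end

section
/- Let f be a monotone submodular function, G_i ⊆ G finite sets, O a finite set, and C = O \ G_i. Then Σ_{v∈C} (f(G_i ∪ {v}) − f(G_i)) ≥ f(O) − f(G). -/
open Finset

lemma marg_aux {U : Type*} [DecidableEq U] (f : Finset U → ℝ)
    (hmono : ∀ X Y, X ⊆ Y → f X ≤ f Y)
    (hsub : ∀ X Y, f (X ∪ Y) + f (X ∩ Y) ≤ f X + f Y)
    (A : Finset U) (S : Finset U) :
    f (A ∪ S) - f A ≤ ∑ v ∈ S, (f (insert v A) - f A) := by
  induction S using Finset.induction_on with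
  | empty => simp
  | @insert x S' hx ih =>
    rw [Finset.sum_insert hx]
    have h1 : f ((A ∪ S') ∪ insert x A) + f ((A ∪ S') ∩ insert x A)
        ≤ f (A ∪ S') + f (insert x A) := hsub _ _
    have h2 : A ⊆ (A ∪ S') ∩ insert x A := by
      intro a ha; simp [ha]
    have h3 : f A ≤ f ((A ∪ S') ∩ insert x A) := hmono _ _ h2
    have h4 : A ∪ insert x S' = (A ∪ S') ∪ insert x A := by
      ext a; simp [or_comm, or_assoc, or_left_comm]
    rw [h4]
    linarith

theorem stmt11 {U : Type*} [DecidableEq U] (f : Finset U → ℝ)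
    (hmono : ∀ X Y, X ⊆ Y → f X ≤ f Y)
    (hsub : ∀ X Y, f (X ∪ Y) + f (X ∩ Y) ≤ f X + f Y)
    (Gi G O : Finset U) (hGG : Gi ⊆ G) :
    ∑ v ∈ O \ Gi, (f (insert v Gi) - f Gi) ≥ f O - f G := by
  have h1 := marg_aux f hmono hsub Gi (O \ Gi)
  have h2 : O ⊆ Gi ∪ (O \ Gi) := by
    intro a ha; by_cases h : a ∈ Gi <;> simp [h, ha]
  have h3 : f O ≤ f (Gi ∪ (O \ Gi)) := hmono _ _ h2
  have h4 : f Gi ≤ f G := hmono _ _ hGG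
  linarith
end

section
/- Single-swap optimality transfer: let f be monotone submodular, d symmetric nonnegative, λ ≥ 0, φ(X) = f(X) + λd(X), φ'(X) = (1/2)f(X) + λd(X), and marginal gains φ_u(S) = φ(S∪{u}) − φ(S), φ'_u(S) = φ'(S∪{u}) − φ'(S). If u ∉ S maximizes φ'_·(S), i.e., φ'_u(S) ≥ φ'_v(S) for all v ∉ S, then φ_u(S) ≥ (1/2)·φ_v(S) for all v ∉ S. -/
open Finset

/-! Write `a_w = f(S ∪ {w}) - f(S) ≥ 0` and `b_w = λ (d(S ∪ {w}) - d(S)) ≥ 0`. Then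
`a_u + b_u ≥ a_u / 2 + b_u ≥ a_v / 2 + b_v ≥ (a_v + b_v) / 2`: the first step uses monotonicity
of `f`, the second the maximality of `u`, the third `b_v ≥ 0`. -/

theorem dSet_mono {U : Type*} {d : U → U → ℝ} (hnn : ∀ u v, 0 ≤ d u v) {X Y : Finset U}
    (hXY : X ⊆ Y) : dSet d X ≤ dSet d Y := by
  unfold dSet
  rw [← sum_product', ← sum_product']
  gcongr
  exact fun p _ _ => hnn p.1 p.2

theorem stmt14_general {U : Type*} [DecidableEq U]
    (d : U → U → ℝ) (hnn : ∀ u v, 0 ≤ d u v)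
    (f : Finset U → ℝ)
    (hmono : ∀ X Y, X ⊆ Y → f X ≤ f Y)
    (lam : ℝ) (hlam : 0 ≤ lam)
    (S : Finset U) (u : U)
    (hmax : ∀ v ∉ S,
      ((1 / 2) * f (insert u S) + lam * dSet d (insert u S))
          - ((1 / 2) * f S + lam * dSet d S)
        ≥ ((1 / 2) * f (insert v S) + lam * dSet d (insert v S))
          - ((1 / 2) * f S + lam * dSet d S)) :
    ∀ v ∉ S,
      (f (insert u S) + lam * dSet d (insert u S)) - (f S + lam * dSet d S)
        ≥ (1 / 2) * ((f (insert v S) + lam * dSet d (insert v S)) - (f S + lam * dSet d S)) := by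
  intro v hv
  have hgain_f : f S ≤ f (insert u S) := hmono _ _ (subset_insert u S)
  have hgain_d : 0 ≤ lam * (dSet d (insert v S) - dSet d S) :=
    mul_nonneg hlam (sub_nonneg.2 (dSet_mono hnn (subset_insert v S)))
  linarith [hmax v hv]

theorem stmt14 {U : Type*} [DecidableEq U]
    (d : U → U → ℝ) (hnn : ∀ u v, 0 ≤ d u v) (hsymm : ∀ u v, d u v = d v u)
    (hself : ∀ u, d u u = 0)
    (f : Finset U → ℝ) (hfnn : ∀ X, 0 ≤ f X)
    (hmono : ∀ X Y, X ⊆ Y → f X ≤ f Y)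
    (hsub : ∀ X Y, f (X ∪ Y) + f (X ∩ Y) ≤ f X + f Y)
    (lam : ℝ) (hlam : 0 ≤ lam)
    (S : Finset U) (u : U) (hu : u ∉ S)
    (hmax : ∀ v ∉ S,
      ((1 / 2) * f (insert u S) + lam * dSet d (insert u S))
          - ((1 / 2) * f S + lam * dSet d S)
        ≥ ((1 / 2) * f (insert v S) + lam * dSet d (insert v S))
          - ((1 / 2) * f S + lam * dSet d S)) :
    ∀ v ∉ S,
      (f (insert u S) + lam * dSet d (insert u S)) - (f S + lam * dSet d S)
        ≥ (1 / 2) * ((f (insert v S) + lam * dSet d (insert v S)) - (f S + lam * dSet d S)) :=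
  stmt14_general d hnn f hmono lam hlam S u hmax
end

section
/- Combining local optimality with the distance and submodular swap lemmas: if for all i ∈ {1,…,t}, f(S) + λd(S) ≥ f(S−b_i+c_i) + λd(S−b_i+c_i), and Σ_i f(S−b_i+c_i) ≥ (t−2)f(S) + f(O), and Σ_i d(S−b_i+c_i) ≥ (t−2)d(S) + (1/α²)d(O), then 2f(S) + 2λd(S) ≥ f(O) + (λ/α²)d(O), and hence f(S) + λd(S) ≥ (1/(2α²))(f(O) + λd(O)) when α ≥ 1 and f, d, λ are nonnegative. -/
/-!
Summing the local-optimality inequalities over the `t` swaps bounds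
`∑ f(S - bᵢ + cᵢ) + λ ∑ d(S - bᵢ + cᵢ)` by `t (f(S) + λ d(S))`; the two swap lemmas bound the same
sum from below by `(t - 2)(f(S) + λ d(S)) + f(O) + (λ / α²) d(O)`, and comparing leaves
`2 (f(S) + λ d(S)) ≥ f(O) + (λ / α²) d(O)`. Since `α² ≥ 1` and `f(O) ≥ 0`, the right side is at least
`(f(O) + λ d(O)) / α²`.
-/

open Finset

lemma add_mul_le_two_mul_of_forall_le_of_le_sum {ι : Type*} (s : Finset ι) (F D : ι → ℝ)
    {x y a b lam β : ℝ} (hlam : 0 ≤ lam) (hlocal : ∀ i ∈ s, F i + lam * D i ≤ x + lam * y)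
    (hF : ((#s : ℝ) - 2) * x + a ≤ ∑ i ∈ s, F i)
    (hD : ((#s : ℝ) - 2) * y + β * b ≤ ∑ i ∈ s, D i) :
    a + lam * (β * b) ≤ 2 * x + 2 * lam * y := by
  have hsum : ∑ i ∈ s, F i + lam * ∑ i ∈ s, D i ≤ #s * (x + lam * y) := by
    rw [mul_sum, ← sum_add_distrib, ← nsmul_eq_mul]
    exact sum_le_card_nsmul s _ _ hlocal
  nlinarith [mul_le_mul_of_nonneg_left hD hlam]

lemma add_div_le_of_add_div_le {a b c y : ℝ} (ha : 0 ≤ a) (hc : 1 ≤ c) (h : a + b / c ≤ y) :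
    (a + b) / c ≤ y := by
  rw [add_div]
  linarith [div_le_self ha hc]

theorem stmt19_general {U : Type*} [DecidableEq U]
    (d : U → U → ℝ)
    (f : Finset U → ℝ) (hfnn : ∀ X, 0 ≤ f X)
    (lam α : ℝ) (hlam : 0 ≤ lam) (hα : 1 ≤ α)
    (S O : Finset U) (t : ℕ) (b c : Fin t → U)
    (hlocal : ∀ i, f S + lam * dSet d S
      ≥ f (insert (c i) (S.erase (b i))) + lam * dSet d (insert (c i) (S.erase (b i))))
    (hf : ∑ i, f (insert (c i) (S.erase (b i))) ≥ ((t : ℝ) - 2) * f S + f O)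
    (hd : ∑ i, dSet d (insert (c i) (S.erase (b i)))
      ≥ ((t : ℝ) - 2) * dSet d S + (1 / α ^ 2) * dSet d O) :
    2 * f S + 2 * lam * dSet d S ≥ f O + (lam / α ^ 2) * dSet d O
    ∧ f S + lam * dSet d S ≥ (1 / (2 * α ^ 2)) * (f O + lam * dSet d O) := by
  have hcard : (#(univ : Finset (Fin t)) : ℝ) = t := by simp
  have hswap := add_mul_le_two_mul_of_forall_le_of_le_sum univ _ _ hlam (fun i _ => hlocal i)
    (hcard ▸ hf) (hcard ▸ hd)
  have hmain : f O + lam * dSet d O / α ^ 2 ≤ 2 * (f S + lam * dSet d S) := by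
    convert hswap using 1 <;> ring
  have hα2 : 1 ≤ α ^ 2 := one_le_pow₀ hα
  refine ⟨by convert hmain using 1 <;> ring, ?_⟩
  calc 1 / (2 * α ^ 2) * (f O + lam * dSet d O) = (f O + lam * dSet d O) / α ^ 2 / 2 := by ring
    _ ≤ 2 * (f S + lam * dSet d S) / 2 := by
      gcongr
      exact add_div_le_of_add_div_le (hfnn O) hα2 hmain
    _ = f S + lam * dSet d S := by ring

theorem stmt19 {U : Type*} [DecidableEq U]
    (d : U → U → ℝ) (hnn : ∀ u v, 0 ≤ d u v)
    (f : Finset U → ℝ) (hfnn : ∀ X, 0 ≤ f X)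
    (lam α : ℝ) (hlam : 0 ≤ lam) (hα : 1 ≤ α)
    (S O : Finset U) (t : ℕ) (b c : Fin t → U)
    (hbS : ∀ i, b i ∈ S) (hcS : ∀ i, c i ∉ S)
    (hlocal : ∀ i, f S + lam * dSet d S
      ≥ f (insert (c i) (S.erase (b i))) + lam * dSet d (insert (c i) (S.erase (b i))))
    (hf : ∑ i, f (insert (c i) (S.erase (b i))) ≥ ((t : ℝ) - 2) * f S + f O)
    (hd : ∑ i, dSet d (insert (c i) (S.erase (b i)))
      ≥ ((t : ℝ) - 2) * dSet d S + (1 / α ^ 2) * dSet d O) :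
    2 * f S + 2 * lam * dSet d S ≥ f O + (lam / α ^ 2) * dSet d O
    ∧ f S + lam * dSet d S ≥ (1 / (2 * α ^ 2)) * (f O + lam * dSet d O) :=
  stmt19_general d f hfnn lam α hlam hα S O t b c hlocal hf hd
end
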